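/- arXiv:2502.19369 — 2 statements merged into one kernel-verified Lean document; each statement's English description precedes it below -/
import Mathlib

section
/- The output matrix A_out of the ConMat algorithm satisfies: (R1) the map sending each homogeneous column index j to its pivot low(j) is a bijection from homogeneous column indices to targetable column indices; (R2) no column is both homogeneous and targetable; (R3) if A_out[i,j] = 1 for some i ≤ low(j), then no homogeneous column s < j has pivot i. -/
/-!
ConMat only ever adds a column to a later one, so `conMat morse A = A * V` with `V` upper
triangular and invertible; and it scans each column bottom-up until none of its nonzero entries is
the pivot of an earlier homogeneous column. That last property is (R3), and (R3) forces distinct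
homogeneous columns to have distinct pivots, which gives (R1).

For (R2), let `j = low j'`. Since `A * A = 0`, the vector `w = V⁻¹ (column j' of A_out)`
satisfies `A_out w = 0`, and its highest nonzero index is `j`. Take the largest row index `r` at
which some column in the support of `w` has a nonzero entry. At least two columns in the support
have pivot `r`, since otherwise row `r` of `A_out w` would not vanish. If column `j` were
homogeneous, monotonicity of the Morse labelling would squeeze `r` and those columns into the
Morse set of `j`. They would then be two homogeneous columns with the same pivot.
-/

namespace CM

variable {n : ℕ} {P : Type*} [DecidableEq P]

/-- `i` is the pivot row (lowest `1`) of column `j` in `A`. -/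
def IsLow (A : Matrix (Fin n) (Fin n) (ZMod 2)) (j i : Fin n) : Prop :=
  A i j ≠ 0 ∧ ∀ k, A k j ≠ 0 → k ≤ i

instance (A : Matrix (Fin n) (Fin n) (ZMod 2)) (j i : Fin n) : Decidable (IsLow A j i) := by
  unfold IsLow; infer_instance

/-- Column `j` is homogeneous: its pivot row lies in the same Morse set
(as measured by `morse`) as `j`. -/
def Homog (A : Matrix (Fin n) (Fin n) (ZMod 2)) (morse : Fin n → P) (j : Fin n) : Prop :=
  ∃ i, IsLow A j i ∧ morse i = morse j

instance (A : Matrix (Fin n) (Fin n) (ZMod 2)) (morse : Fin n → P) (j : Fin n) :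
    Decidable (Homog A morse j) := by
  unfold Homog; infer_instance

/-- Row/column `i` is targetable: it is the pivot row of some homogeneous column. -/
def Targetable (A : Matrix (Fin n) (Fin n) (ZMod 2)) (morse : Fin n → P) (i : Fin n) : Prop :=
  ∃ j, Homog A morse j ∧ IsLow A j i

/-- Add column `s` to column `j` (over `ℤ/2`). -/
def addCol (A : Matrix (Fin n) (Fin n) (ZMod 2)) (s j : Fin n) :
    Matrix (Fin n) (Fin n) (ZMod 2) :=
  fun i k => if k = j then A i j + A i s else A i k

/-- Homogeneous columns `s < j` with pivot `i`, candidates for addition to column `j`. -/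
def candidates (A : Matrix (Fin n) (Fin n) (ZMod 2)) (morse : Fin n → P) (j i : Fin n) :
    Finset (Fin n) :=
  Finset.univ.filter fun s => s < j ∧ Homog A morse s ∧ IsLow A s i

/-- One inner step of ConMat: if `A[i,j] = 1` and some homogeneous column `s < j`
has pivot `i`, add such a column (the leftmost one) to column `j`. -/
def stepIJ (morse : Fin n → P) (A : Matrix (Fin n) (Fin n) (ZMod 2)) (j i : Fin n) :
    Matrix (Fin n) (Fin n) (ZMod 2) :=
  if h : A i j ≠ 0 ∧ (candidates A morse j i).Nonempty then
    addCol A ((candidates A morse j i).min' h.2) j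
  else A

/-- Exhaustively reduce column `j`, scanning rows from the bottom up. -/
def reduceCol (morse : Fin n → P) (A : Matrix (Fin n) (Fin n) (ZMod 2)) (j : Fin n) :
    Matrix (Fin n) (Fin n) (ZMod 2) :=
  ((List.finRange n).reverse).foldl (fun B i => stepIJ morse B j i) A

/-- The ConMat algorithm: homogeneity-restricted exhaustive left-to-right column
reduction. -/
def conMat (morse : Fin n → P) (A : Matrix (Fin n) (Fin n) (ZMod 2)) :
    Matrix (Fin n) (Fin n) (ZMod 2) :=
  (List.finRange n).foldl (fun B j => reduceCol morse B j) A

/-- All columns `s < j` with pivot `i` (no homogeneity restriction). -/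
def candidatesC (A : Matrix (Fin n) (Fin n) (ZMod 2)) (j i : Fin n) : Finset (Fin n) :=
  Finset.univ.filter fun s => s < j ∧ IsLow A s i

/-- One inner step of the complete (unrestricted) reduction. -/
def stepIJC (A : Matrix (Fin n) (Fin n) (ZMod 2)) (j i : Fin n) :
    Matrix (Fin n) (Fin n) (ZMod 2) :=
  if h : A i j ≠ 0 ∧ (candidatesC A j i).Nonempty then
    addCol A ((candidatesC A j i).min' h.2) j
  else A

/-- Complete (unrestricted) left-to-right column reduction; afterwards every
nonzero column has a pivot distinct from those of all other columns. -/
def completeReduce (A : Matrix (Fin n) (Fin n) (ZMod 2)) :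
    Matrix (Fin n) (Fin n) (ZMod 2) :=
  (List.finRange n).foldl
    (fun B j => ((List.finRange n).reverse).foldl (fun C i => stepIJC C j i) B) A

end CM

namespace Matrix

variable {m R : Type*} [Fintype m] [LinearOrder m]

theorem IsUpperTriangular.mulVec_apply_eq_zero [NonUnitalNonAssocSemiring R] {U : Matrix m m R}
    (hU : U.IsUpperTriangular) {v : m → R} {j : m} (hv : ∀ l, j < l → v l = 0) {k : m}
    (hk : j < k) : (U *ᵥ v) k = 0 := by
  simp only [mulVec, dotProduct]
  refine Finset.sum_eq_zero fun l _ => ?_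
  rcases lt_or_ge l k with hlk | hkl
  · rw [hU hlk, zero_mul]
  · rw [hv l (hk.trans_le hkl), mul_zero]

theorem IsUpperTriangular.mulVec_apply_self [NonUnitalNonAssocSemiring R] {U : Matrix m m R}
    (hU : U.IsUpperTriangular) {v : m → R} {j : m} (hv : ∀ l, j < l → v l = 0) :
    (U *ᵥ v) j = U j j * v j := by
  simp only [mulVec, dotProduct]
  exact Finset.sum_eq_single j
    (fun l _ hlj => by
      rcases lt_or_gt_of_ne hlj with hlt | hgt
      · rw [hU hlt, zero_mul]
      · rw [hv l hgt, mul_zero])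
    (fun h => absurd (Finset.mem_univ j) h)

theorem IsUpperTriangular.diag_ne_zero [DecidableEq m] [CommRing R] [Nontrivial R]
    {U : Matrix m m R} (hU : U.IsUpperTriangular) (hdet : IsUnit U.det) (i : m) : U i i ≠ 0 := by
  intro h
  rw [det_of_isUpperTriangular hU,
    Finset.prod_eq_zero (f := fun k => U k k) (Finset.mem_univ i) h] at hdet
  exact not_isUnit_zero hdet

variable (m R) in
def upperTriangularUnits [DecidableEq m] [CommRing R] : Submonoid (Matrix m m R) where
  carrier := {V | V.IsUpperTriangular ∧ IsUnit V.det}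
  one_mem' := ⟨blockTriangular_one, by simp⟩
  mul_mem' := fun ⟨hV, hVdet⟩ ⟨hW, hWdet⟩ =>
    ⟨hV.mul hW, by rw [det_mul]; exact hVdet.mul hWdet⟩

theorem transvection_mem_upperTriangularUnits [DecidableEq m] [CommRing R] {i j : m}
    (hij : i < j) (c : R) : transvection i j c ∈ upperTriangularUnits m R :=
  ⟨blockTriangular_one.add (blockTriangular_single hij.le c),
    by rw [det_transvection_of_ne i j hij.ne]; exact isUnit_one⟩

end Matrix

namespace List

variable {α β : Type*} {r : α → α → Prop} (f : β → α → β) (Q : β → α → Prop)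

theorem foldl_invariant (hkeep : ∀ b a k, r k a → Q b k → Q (f b a) k) :
    ∀ (L : List α) (b : β) (k : α), (∀ a ∈ L, r k a) → Q b k → Q (L.foldl f b) k
  | [], _, _, _, hb => hb
  | a :: L, b, k, hk, hb =>
      foldl_invariant hkeep L (f b a) k (fun x hx => hk x (mem_cons_of_mem a hx))
        (hkeep b a k (hk a mem_cons_self) hb)

theorem forall_mem_foldl_of_pairwise (hset : ∀ b a, Q (f b a) a)
    (hkeep : ∀ b a k, r k a → Q b k → Q (f b a) k) :
    ∀ (L : List α) (b : β), L.Pairwise r → ∀ k ∈ L, Q (L.foldl f b) k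
  | [], _, _, _, hk => absurd hk not_mem_nil
  | a :: L, b, hL, k, hk => by
      rw [pairwise_cons] at hL
      rcases mem_cons.1 hk with rfl | hk
      · exact foldl_invariant f Q hkeep L (f b k) k hL.1 (hset b k)
      · exact forall_mem_foldl_of_pairwise hset hkeep L (f b a) hL.2 k hk

theorem exists_mem_foldl_eq_mul {M : Type*} [Monoid M] (S : Submonoid M) {f : M → α → M}
    (hf : ∀ x a, ∃ s ∈ S, f x a = x * s) : ∀ (L : List α) (x : M), ∃ s ∈ S, L.foldl f x = x * s
  | [], x => ⟨1, S.one_mem, (mul_one x).symm⟩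
  | a :: L, x => by
      obtain ⟨s, hs, hfx⟩ := hf x a
      obtain ⟨t, ht, hL⟩ := exists_mem_foldl_eq_mul S hf L (f x a)
      exact ⟨s * t, S.mul_mem hs ht, by rw [foldl_cons, hL, hfx, mul_assoc]⟩

end List

namespace CM

open Matrix

variable {n : ℕ} {P : Type*} {morse : Fin n → P}

def IsHomogReduced (C : Matrix (Fin n) (Fin n) (ZMod 2)) (morse : Fin n → P) : Prop :=
  ∀ i j s, C i j ≠ 0 → s < j → Homog C morse s → ¬ IsLow C s i

theorem IsHomogReduced.pivot_injective {C : Matrix (Fin n) (Fin n) (ZMod 2)}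
    (h : IsHomogReduced C morse) {j j' i : Fin n} (hj : Homog C morse j)
    (hj' : Homog C morse j') (hi : IsLow C j i) (hi' : IsLow C j' i) : j = j' := by
  rcases lt_trichotomy j j' with hlt | heq | hgt
  · exact absurd hi (h i j' j hi'.1 hlt hj)
  · exact heq
  · exact absurd hi' (h i j j' hi.1 hgt hj')

theorem isLow_congr {A B : Matrix (Fin n) (Fin n) (ZMod 2)} {s : Fin n}
    (h : ∀ i, A i s = B i s) (i : Fin n) : IsLow A s i ↔ IsLow B s i := by
  simp only [IsLow, h]

theorem homog_congr {A B : Matrix (Fin n) (Fin n) (ZMod 2)} {s : Fin n}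
    (h : ∀ i, A i s = B i s) : Homog A morse s ↔ Homog B morse s := by
  simp only [Homog, isLow_congr h]

section Reduction

variable [DecidableEq P]

theorem candidates_congr {A B : Matrix (Fin n) (Fin n) (ZMod 2)} {j i : Fin n}
    (h : ∀ i' s, s < j → A i' s = B i' s) :
    candidates A morse j i = candidates B morse j i := by
  ext s
  simp only [candidates, Finset.mem_filter, Finset.mem_univ, true_and]
  exact and_congr_right fun hs => and_congr (homog_congr (h · s hs)) (isLow_congr (h · s hs) i)

theorem addCol_eq_mul_transvection (A : Matrix (Fin n) (Fin n) (ZMod 2)) (s j : Fin n) :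
    addCol A s j = A * transvection s j 1 := by
  ext i k
  by_cases hk : k = j
  · subst hk; simp [addCol]
  · simp [addCol, hk]

theorem stepIJ_apply_of_ne {A : Matrix (Fin n) (Fin n) (ZMod 2)} {j i i' k : Fin n}
    (h : k ≠ j) : stepIJ morse A j i i' k = A i' k := by
  unfold stepIJ
  split_ifs
  · simp [addCol, h]
  · rfl

theorem stepIJ_apply_of_lt {A : Matrix (Fin n) (Fin n) (ZMod 2)} {j i k : Fin n} (hik : i < k) :
    stepIJ morse A j i k j = A k j := by
  unfold stepIJ
  split_ifs with hc
  · have hs := (Finset.mem_filter.1 ((candidates A morse j i).min'_mem hc.2)).2.2.2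
    have hzero : A k ((candidates A morse j i).min' hc.2) = 0 :=
      by_contra fun hne => (hs.2 k hne).not_gt hik
    simp [addCol, hzero]
  · rfl

theorem stepIJ_clears {A : Matrix (Fin n) (Fin n) (ZMod 2)} {j i : Fin n}
    (h : stepIJ morse A j i i j ≠ 0) : candidates (stepIJ morse A j i) morse j i = ∅ := by
  unfold stepIJ at h ⊢
  split_ifs at h ⊢ with hc
  · have hs := (Finset.mem_filter.1 ((candidates A morse j i).min'_mem hc.2)).2.2.2
    have hcancel : ∀ {x y : ZMod 2}, x ≠ 0 → y ≠ 0 → x + y = 0 := by decide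
    simp only [addCol] at h
    exact absurd (hcancel hc.1 hs.1) h
  · exact Finset.not_nonempty_iff_eq_empty.1 fun hne => hc ⟨h, hne⟩

theorem reduceCol_apply_of_ne {A : Matrix (Fin n) (Fin n) (ZMod 2)} {j i k : Fin n}
    (h : k ≠ j) : reduceCol morse A j i k = A i k := by
  unfold reduceCol
  induction (List.finRange n).reverse generalizing A with
  | nil => rfl
  | cons a l ih => rw [List.foldl_cons, ih, stepIJ_apply_of_ne h]

theorem reduceCol_clears (morse : Fin n → P) (A : Matrix (Fin n) (Fin n) (ZMod 2)) (j k : Fin n)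
    (h : reduceCol morse A j k j ≠ 0) : candidates (reduceCol morse A j) morse j k = ∅ :=
  List.forall_mem_foldl_of_pairwise (r := fun k a => a < k) (fun B i => stepIJ morse B j i)
    (fun B k => B k j ≠ 0 → candidates B morse j k = ∅)
    (fun _ _ => stepIJ_clears)
    (fun B a k hak hB hk => by
      rw [stepIJ_apply_of_lt hak] at hk
      rw [candidates_congr fun i s hs => stepIJ_apply_of_ne hs.ne]
      exact hB hk)
    _ A (List.pairwise_reverse.2 (List.pairwise_lt_finRange n)) k
    (List.mem_reverse.2 (List.mem_finRange k)) h

theorem conMat_isHomogReduced (morse : Fin n → P) (A : Matrix (Fin n) (Fin n) (ZMod 2)) :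
    IsHomogReduced (conMat morse A) morse := by
  intro i j s hij hsj hs hsi
  have hclear := List.forall_mem_foldl_of_pairwise (r := (· < ·))
    (fun B j => reduceCol morse B j) (fun B j => ∀ i, B i j ≠ 0 → candidates B morse j i = ∅)
    (fun B j => reduceCol_clears morse B j)
    (fun B a k hka hB i hi => by
      rw [reduceCol_apply_of_ne hka.ne] at hi
      rw [candidates_congr fun i' s hs => reduceCol_apply_of_ne (hs.trans hka).ne]
      exact hB i hi)
    _ A (List.pairwise_lt_finRange n) j (List.mem_finRange j) i hij
  exact Finset.eq_empty_iff_forall_notMem.1 hclear s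
    (Finset.mem_filter.2 ⟨Finset.mem_univ s, hsj, hs, hsi⟩)

theorem exists_stepIJ_eq_mul (A : Matrix (Fin n) (Fin n) (ZMod 2)) (j i : Fin n) :
    ∃ E ∈ upperTriangularUnits (Fin n) (ZMod 2), stepIJ morse A j i = A * E := by
  unfold stepIJ
  split_ifs with hc
  · have hlt := (Finset.mem_filter.1 ((candidates A morse j i).min'_mem hc.2)).2.1
    exact ⟨_, transvection_mem_upperTriangularUnits hlt 1, addCol_eq_mul_transvection _ _ _⟩
  · exact ⟨1, one_mem _, (mul_one A).symm⟩

theorem exists_conMat_eq_mul (morse : Fin n → P) (A : Matrix (Fin n) (Fin n) (ZMod 2)) :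
    ∃ V ∈ upperTriangularUnits (Fin n) (ZMod 2), conMat morse A = A * V :=
  List.exists_mem_foldl_eq_mul _
    (fun B j => List.exists_mem_foldl_eq_mul _ (fun C i => exists_stepIJ_eq_mul C j i) _ B) _ A

end Reduction

theorem exists_mulVec_eq_zero_of_isLow {A V : Matrix (Fin n) (Fin n) (ZMod 2)}
    (hAA : A * A = 0) (hV : V ∈ upperTriangularUnits (Fin n) (ZMod 2)) {j' j : Fin n}
    (hlow : IsLow (A * V) j' j) : ∃ w, (A * V) *ᵥ w = 0 ∧ w j ≠ 0 ∧ ∀ k, j < k → w k = 0 := by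
  obtain ⟨hVup, hVdet⟩ := hV
  have := V.invertibleOfIsUnitDet hVdet
  have hVinv : V⁻¹.IsUpperTriangular := blockTriangular_inv_of_blockTriangular hVup
  have hv : ∀ l, j < l → (A * V).col j' l = 0 := fun l hl =>
    by_contra fun h => (hlow.2 l h).not_gt hl
  refine ⟨V⁻¹ *ᵥ (A * V).col j', ?_, ?_, fun k hk => hVinv.mulVec_apply_eq_zero hv hk⟩
  · rw [← mulVec_single_one, mulVec_mulVec, mulVec_mulVec, ← Matrix.mul_assoc,
      mul_nonsing_inv_cancel_right _ _ hVdet, hAA, Matrix.zero_mul, zero_mulVec]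
  · rw [hVinv.mulVec_apply_self hv]
    exact mul_ne_zero (hVinv.diag_ne_zero (V.isUnit_nonsing_inv_det hVdet) j) hlow.1

theorem exists_isLow_ne_of_mulVec_eq_zero {C : Matrix (Fin n) (Fin n) (ZMod 2)}
    {w : Fin n → ZMod 2} (hw : C *ᵥ w = 0) {i j : Fin n} (hwj : w j ≠ 0) (hC : C i j ≠ 0) :
    ∃ r, i ≤ r ∧ ∃ k k', k ≠ k' ∧ w k ≠ 0 ∧ w k' ≠ 0 ∧ IsLow C k r ∧ IsLow C k' r := by
  classical
  set T := Finset.univ.filter fun r => ∃ k, w k ≠ 0 ∧ C r k ≠ 0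
  have hi : i ∈ T := Finset.mem_filter.2 ⟨Finset.mem_univ i, j, hwj, hC⟩
  set r := T.max' ⟨i, hi⟩
  obtain ⟨k, hwk, hCk⟩ := (Finset.mem_filter.1 (T.max'_mem ⟨i, hi⟩)).2
  have hlow : ∀ k, w k ≠ 0 → C r k ≠ 0 → IsLow C k r := fun k hwk hCk =>
    ⟨hCk, fun l hl => T.le_max' l (Finset.mem_filter.2 ⟨Finset.mem_univ l, k, hwk, hl⟩)⟩
  refine ⟨r, T.le_max' i hi, ?_⟩
  by_contra! hunique
  have hrow : (C *ᵥ w) r = C r k * w k :=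
    Finset.sum_eq_single k
      (fun k' _ hk' => by
        by_cases hwk' : w k' = 0
        · rw [hwk', mul_zero]
        by_cases hCk' : C r k' = 0
        · exact mul_eq_zero_of_left hCk' _
        exact absurd (hlow k' hwk' hCk') (hunique k k' hk'.symm hwk hwk' (hlow k hwk hCk)))
      (fun h => absurd (Finset.mem_univ k) h)
  rw [hw] at hrow
  exact mul_ne_zero hCk hwk hrow.symm

theorem not_homog_of_mulVec_eq_zero [PartialOrder P] (hmono : Monotone morse)
    {C : Matrix (Fin n) (Fin n) (ZMod 2)} (hC : C.IsUpperTriangular) (hred : IsHomogReduced C morse)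
    {w : Fin n → ZMod 2} (hw : C *ᵥ w = 0) {j : Fin n} (hwj : w j ≠ 0) (hwtop : ∀ k, j < k → w k = 0) :
    ¬ Homog C morse j := by
  rintro ⟨i, hij, hmorse⟩
  obtain ⟨r, hir, k, k', hkk', hwk, hwk', hk, hk'⟩ :=
    exists_isLow_ne_of_mulVec_eq_zero hw hwj hij.1
  have homog : ∀ k, w k ≠ 0 → IsLow C k r → Homog C morse k := fun k hwk hk => by
    have hrk : r ≤ k := not_lt.1 fun h => hk.1 (hC h)
    have hkj : k ≤ j := not_lt.1 fun h => hwk (hwtop k h)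
    refine ⟨r, hk, le_antisymm (hmono hrk) ?_⟩
    calc morse k ≤ morse j := hmono hkj
      _ = morse i := hmorse.symm
      _ ≤ morse r := hmono hir
  exact hkk' (hred.pivot_injective (homog k hwk hk) (homog k' hwk' hk') hk hk')

/-- The output matrix `A_out = conMat morse A` of the ConMat algorithm, run on a
strictly upper triangular boundary matrix (`A * A = 0`) whose index order is
compatible with the Morse-set blocks, satisfies:
(R1) `j ↦ low(j)` is a bijection from homogeneous columns to targetable columns;
(R2) no column is both homogeneous and targetable;
(R3) if `A_out[i,j] = 1` (for `i ≤ low(j)`, which is automatic), then no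
homogeneous column `s < j` has pivot `i`. -/
theorem stmt_13 {n m : ℕ} (morse : Fin n → Fin m) (hmono : Monotone morse)
    (A : Matrix (Fin n) (Fin n) (ZMod 2))
    (hupper : ∀ i j, A i j ≠ 0 → i < j)
    (hboundary : A * A = 0) :
    -- (R1) : `low` is well defined on homogeneous columns, injective, and onto
    -- the targetable columns
    ((∀ j, Homog (conMat morse A) morse j →
        ∃ i, IsLow (conMat morse A) j i ∧ Targetable (conMat morse A) morse i) ∧
      (∀ j j' i, Homog (conMat morse A) morse j → Homog (conMat morse A) morse j' →
        IsLow (conMat morse A) j i → IsLow (conMat morse A) j' i → j = j') ∧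
      (∀ i, Targetable (conMat morse A) morse i →
        ∃ j, Homog (conMat morse A) morse j ∧ IsLow (conMat morse A) j i)) ∧
    -- (R2)
    (∀ j, ¬ (Homog (conMat morse A) morse j ∧ Targetable (conMat morse A) morse j)) ∧
    -- (R3)
    (∀ i j s, (conMat morse A) i j ≠ 0 → s < j →
        Homog (conMat morse A) morse s → ¬ IsLow (conMat morse A) s i) := by
  have hred := conMat_isHomogReduced morse A
  obtain ⟨V, hV, hCV⟩ := exists_conMat_eq_mul morse A
  have hA : A.IsUpperTriangular := fun i j hji => by_contra fun h => (hupper i j h).asymm hji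
  have hC : (conMat morse A).IsUpperTriangular := hCV ▸ hA.mul hV.1
  refine ⟨⟨fun j ⟨i, hi, hmorse⟩ => ⟨i, hi, j, ⟨i, hi, hmorse⟩, hi⟩,
    fun _ _ _ => hred.pivot_injective, fun _ hi => hi⟩, ?_, hred⟩
  rintro j ⟨hj, j', -, hlow⟩
  rw [hCV] at hlow
  obtain ⟨w, hw, hwj, hwtop⟩ := exists_mulVec_eq_zero_of_isLow hboundary hV hlow
  exact not_homog_of_mulVec_eq_zero hmono hC hred (by rwa [hCV]) hwj hwtop hj

end CM
end

section
/- If two P-filtered input boundary matrices A and A' are Morse fixed (the orderings of simplices within each Morse set agree, though the interleaving across Morse sets may differ via different linear extensions of P), then the connection matrices S and S' output by ConMat agree up to the induced correspondence of indices: S[i,j] = S'[i',j'] whenever i =_σ i' and j =_σ j'. Consequently there is a permutation matrix R with RᵀSR = S'. -/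
namespace CM

/-- The boundary matrix `∂` of the simplicial complex, reindexed by an ordering
`e` of the simplices: `A[i,j] = ∂[e i, e j]`. -/
def reindex {n : ℕ} (D : Matrix (Fin n) (Fin n) (ZMod 2)) (e : Fin n ≃ Fin n) :
    Matrix (Fin n) (Fin n) (ZMod 2) :=
  fun i j => D (e i) (e j)

/-- Index `i` is retained in the connection matrix: neither homogeneous nor
targetable in the reduced matrix. -/
def Retained {n : ℕ} {P : Type*} [DecidableEq P] (B : Matrix (Fin n) (Fin n) (ZMod 2))
    (morse : Fin n → P) (i : Fin n) : Prop :=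
  ¬ Homog B morse i ∧ ¬ Targetable B morse i

section Fold

variable {σ α : Type*} (I : σ → Prop) (op : σ → α → σ)

theorem foldl_invariant (hI : ∀ s a, I s → I (op s a)) (l : List α) {s : σ} (hs : I s) :
    I (l.foldl op s) := by
  induction l generalizing s with
  | nil => exact hs
  | cons a l ih => exact ih (hI s a hs)

theorem foldl_congr_of_invariant {op' : σ → α → σ} (hI : ∀ s a, I s → I (op s a))
    (hop : ∀ s a, I s → op s a = op' s a) (l : List α) {s : σ} (hs : I s) :
    l.foldl op s = l.foldl op' s := by
  induction l generalizing s with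
  | nil => rfl
  | cons a l ih => rw [List.foldl_cons, List.foldl_cons, ← hop s a hs, ih (hI s a hs)]

theorem foldl_append_cons_of_comm (hI : ∀ s a, I s → I (op s a)) {u v : List α} {a : α}
    (hcomm : ∀ x ∈ u, ∀ s, I s → op (op s x) a = op (op s a) x) {s : σ} (hs : I s) :
    (u ++ a :: v).foldl op s = (u ++ v).foldl op (op s a) := by
  induction u generalizing s with
  | nil => rfl
  | cons x u ih =>
    simp only [List.cons_append, List.foldl_cons]
    rw [ih (fun y hy => hcomm y (List.mem_cons_of_mem _ hy)) (hI s x hs),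
      hcomm x List.mem_cons_self s hs]

theorem foldl_eq_of_perm_of_comm (hI : ∀ s a, I s → I (op s a)) {l₁ l₂ : List α}
    (hp : l₁.Perm l₂) (hnd : l₁.Nodup)
    (hcomm : ∀ a b, [a, b].Sublist l₁ → [b, a].Sublist l₂ →
      ∀ s, I s → op (op s a) b = op (op s b) a)
    {s : σ} (hs : I s) : l₁.foldl op s = l₂.foldl op s := by
  induction l₂ generalizing l₁ s with
  | nil => rw [hp.eq_nil]
  | cons a t ih =>
    obtain ⟨u, v, rfl⟩ := List.append_of_mem (hp.mem_iff.mpr List.mem_cons_self)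
    have hau : a ∉ u := fun h => List.disjoint_of_nodup_append hnd h List.mem_cons_self
    have hsub : (u ++ v).Sublist (u ++ a :: v) := (List.sublist_cons_self a v).append_left u
    rw [foldl_append_cons_of_comm I op hI ?_ hs, List.foldl_cons]
    · exact ih (List.perm_middle.symm.trans hp).cons_inv (hnd.sublist hsub)
        (fun x y hxy hyx => hcomm x y (hxy.trans hsub) (hyx.cons a)) (hI s a hs)
    · intro x hx
      have hxt : x ∈ t := (List.mem_cons.mp (hp.subset (List.mem_append_left _ hx))).resolve_left
        fun h => hau (h ▸ hx)
      refine hcomm x a ?_ ((List.singleton_sublist.mpr hxt).cons_cons a)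
      simpa using (List.singleton_sublist.mpr hx).append
        (List.singleton_sublist.mpr (List.mem_cons_self (a := a) (l := v)))

end Fold

theorem rel_of_pair_sublist_map {α β : Type*} {R : α → α → Prop} {l : List α}
    (hl : l.Pairwise R) (f : α ≃ β) {x y : β} (h : [x, y].Sublist (l.map f)) :
    R (f.symm x) (f.symm y) := by
  have hl' : (l.map f).Pairwise (fun a b => R (f.symm a) (f.symm b)) :=
    List.pairwise_map.2 (by simpa using hl)
  simpa using hl'.sublist h

abbrev Mat (n : ℕ) := Matrix (Fin n) (Fin n) (ZMod 2)

section ConMat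

variable {n : ℕ} {P : Type*}

theorem perm_map_finRange (e e' : Fin n ≃ Fin n) :
    ((List.finRange n).map e).Perm ((List.finRange n).map e') :=
  (Equiv.Perm.map_finRange_perm e).trans (Equiv.Perm.map_finRange_perm e').symm

theorem perm_map_finRange_reverse (e e' : Fin n ≃ Fin n) :
    ((List.finRange n).reverse.map e).Perm ((List.finRange n).reverse.map e') := by
  simpa only [List.map_reverse] using (List.reverse_perm _).trans
    ((perm_map_finRange e e').trans (List.reverse_perm _).symm)

@[simp]
theorem reindex_apply (B : Mat n) (f : Fin n ≃ Fin n) (i j : Fin n) :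
    reindex B f i j = B (f i) (f j) := rfl

theorem IsLow.unique {A : Mat n} {j i i' : Fin n} (h : IsLow A j i) (h' : IsLow A j i') :
    i = i' :=
  le_antisymm (h'.2 i h.1) (h.2 i' h'.1)

theorem isLow_congr_s15 {A A' : Mat n} {j i : Fin n} (h : ∀ k, A k j = A' k j) :
    IsLow A j i ↔ IsLow A' j i := by
  simp only [IsLow, h]

theorem homog_congr_s15 {A A' : Mat n} {m : Fin n → P} {j : Fin n} (h : ∀ k, A k j = A' k j) :
    Homog A m j ↔ Homog A' m j := by
  simp only [Homog, isLow_congr_s15 h]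

/- ConMat for the ordering `f`, with rows and columns labelled by simplices instead of
positions (see `conMat_reindex`), so that runs for different orderings act on the same
matrix. -/

section SimplexLabels

variable [DecidableEq P] (m : Fin n → P) (f : Fin n ≃ Fin n)

/-- Its elements are positions in the order `f`, while `a` and `b` are simplices. -/
def candidatesAt (B : Mat n) (a b : Fin n) : Finset (Fin n) :=
  candidates (reindex B f) (m ∘ f) (f.symm a) (f.symm b)

def pivotChoice (B : Mat n) (a b : Fin n) : Option (Fin n) :=
  if h : B b a ≠ 0 ∧ (candidatesAt m f B a b).Nonempty then
    some (f ((candidatesAt m f B a b).min' h.2))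
  else none

def simplexStep (a : Fin n) (B : Mat n) (b : Fin n) : Mat n :=
  (pivotChoice m f B a b).elim B fun s => addCol B s a

def simplexReduceCol (B : Mat n) (a : Fin n) : Mat n :=
  ((List.finRange n).reverse.map f).foldl (simplexStep m f a) B

def simplexConMat (D : Mat n) : Mat n :=
  ((List.finRange n).map f).foldl (simplexReduceCol m f) D

theorem stepIJ_reindex (B : Mat n) (j i : Fin n) :
    stepIJ (m ∘ f) (reindex B f) j i = reindex (simplexStep m f (f j) B (f i)) f := by
  have hc : candidatesAt m f B (f j) (f i) = candidates (reindex B f) (m ∘ f) j i := by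
    simp [candidatesAt]
  unfold stepIJ simplexStep pivotChoice
  by_cases h : B (f i) (f j) ≠ 0 ∧ (candidates (reindex B f) (m ∘ f) j i).Nonempty
  · rw [dif_pos (show reindex B f i j ≠ 0 ∧ _ from h), dif_pos (by rwa [hc])]
    ext x y
    simp [addCol, hc]
  · rw [dif_neg (show ¬(reindex B f i j ≠ 0 ∧ _) from h), dif_neg (by rwa [hc])]
    rfl

theorem conMat_reindex (D : Mat n) :
    conMat (m ∘ f) (reindex D f) = reindex (simplexConMat m f D) f := by
  unfold conMat simplexConMat
  rw [List.foldl_map]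
  refine List.foldl_hom (reindex · f) fun B j => ?_
  unfold reduceCol simplexReduceCol
  rw [List.foldl_map]
  exact List.foldl_hom (reindex · f) fun C i => stepIJ_reindex m f C j i

end SimplexLabels

theorem addCol_comm (B : Mat n) {s₁ s₂ a : Fin n} (h₁ : s₁ ≠ a) (h₂ : s₂ ≠ a) :
    addCol (addCol B s₁ a) s₂ a = addCol (addCol B s₂ a) s₁ a := by
  ext x y
  by_cases hy : y = a
  · simp only [addCol, hy, if_pos, if_neg h₁, if_neg h₂]
    ring
  · simp [addCol, hy]

def Filtered (L : P → P → Prop) (m : Fin n → P) (B : Mat n) : Prop :=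
  ∀ x y, B x y ≠ 0 → L (m x) (m y)

def MonotoneOrdering (L : P → P → Prop) (m : Fin n → P) (f : Fin n ≃ Fin n) : Prop :=
  ∀ i j : Fin n, i ≤ j → L (m (f i)) (m (f j))

def MorseFixed (m : Fin n → P) (e e' : Fin n ≃ Fin n) : Prop :=
  ∀ a b, m a = m b → (e.symm a ≤ e.symm b ↔ e'.symm a ≤ e'.symm b)

/-- `b` is the pivot of column `s` and lies in the Morse set of `s`, phrased so that only the
order of `f` inside that Morse set matters (see `homog_isLow_iff`). -/
def IsMorsePivot (m : Fin n → P) (f : Fin n ≃ Fin n) (B : Mat n) (s b : Fin n) : Prop :=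
  B b s ≠ 0 ∧ m b = m s ∧ ∀ k, B k s ≠ 0 → m k = m s → f.symm k ≤ f.symm b

section Orderings

variable {L : P → P → Prop} {m : Fin n → P} {f : Fin n ≃ Fin n}

theorem MonotoneOrdering.filtered_of_upper {D : Mat n} (hf : MonotoneOrdering L m f)
    (hup : ∀ i j, reindex D f i j ≠ 0 → i < j) : Filtered L m D := fun x y hxy => by
  simpa using hf _ _ (hup (f.symm x) (f.symm y) (by simpa using hxy)).le

theorem MonotoneOrdering.morse_eq [Std.Antisymm L] (hf : MonotoneOrdering L m f) {x y : Fin n}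
    (hxy : L (m x) (m y)) (hyx : f.symm y ≤ f.symm x) : m x = m y :=
  antisymm hxy (by simpa using hf _ _ hyx)

end Orderings

section Steps

variable [DecidableEq P] {m : Fin n → P} {f : Fin n ≃ Fin n} {B B' : Mat n} {a b : Fin n}

theorem mem_candidatesAt {t : Fin n} :
    t ∈ candidatesAt m f B a b ↔
      t < f.symm a ∧ Homog (reindex B f) (m ∘ f) t ∧ IsLow (reindex B f) t (f.symm b) := by
  simp [candidatesAt, candidates]

theorem morse_eq_of_mem_candidatesAt {s : Fin n} (h : f.symm s ∈ candidatesAt m f B a b) :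
    m s = m b := by
  obtain ⟨-, ⟨i, hi, hm⟩, hlow⟩ := mem_candidatesAt.1 h
  rw [hi.unique hlow] at hm
  simpa using hm.symm

theorem ne_of_mem_candidatesAt {s : Fin n} (h : f.symm s ∈ candidatesAt m f B a b) : s ≠ a := by
  rintro rfl
  exact lt_irrefl _ (mem_candidatesAt.1 h).1

theorem mem_candidatesAt_congr {t : Fin n} (h : ∀ x, B x (f t) = B' x (f t)) :
    t ∈ candidatesAt m f B a b ↔ t ∈ candidatesAt m f B' a b := by
  have h' : ∀ k, reindex B f k t = reindex B' f k t := fun k => h (f k)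
  rw [mem_candidatesAt, mem_candidatesAt, homog_congr_s15 h', isLow_congr_s15 h']

theorem candidatesAt_congr (h : ∀ x y, y ≠ a → B x y = B' x y) :
    candidatesAt m f B a b = candidatesAt m f B' a b := by
  ext t
  by_cases ht : f t = a
  · simp [mem_candidatesAt, ← ht]
  · exact mem_candidatesAt_congr fun x => h x _ ht

theorem pivotChoice_congr (hba : B b a = B' b a)
    (hc : candidatesAt m f B a b = candidatesAt m f B' a b) :
    pivotChoice m f B a b = pivotChoice m f B' a b := by
  simp only [pivotChoice, hba, hc]

theorem pivotChoice_eq_some_iff {s : Fin n} :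
    pivotChoice m f B a b = some s ↔ B b a ≠ 0 ∧ f.symm s ∈ candidatesAt m f B a b ∧
      ∀ t, f.symm t ∈ candidatesAt m f B a b → f.symm s ≤ f.symm t := by
  constructor
  · intro h
    unfold pivotChoice at h
    split_ifs at h with h₀
    obtain rfl := Option.some_injective _ h
    simp only [Equiv.symm_apply_apply]
    exact ⟨h₀.1, Finset.min'_mem _ _, fun t ht => Finset.min'_le _ _ ht⟩
  · rintro ⟨hba, hs, hmin⟩
    have hne : (candidatesAt m f B a b).Nonempty := ⟨_, hs⟩
    have hleast : IsLeast (candidatesAt m f B a b : Set (Fin n)) (f.symm s) :=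
      ⟨hs, fun t ht => by simpa using hmin (f t) (by simpa using ht)⟩
    rw [pivotChoice, dif_pos ⟨hba, hne⟩, (Finset.isLeast_min' _ hne).unique hleast,
      Equiv.apply_symm_apply]

theorem simplexStep_apply_of_ne {x y : Fin n} (hy : y ≠ a) :
    simplexStep m f a B b x y = B x y := by
  unfold simplexStep
  cases pivotChoice m f B a b <;> simp [addCol, hy]

theorem simplexReduceCol_apply_of_ne {x y : Fin n} (hy : y ≠ a) :
    simplexReduceCol m f B a x y = B x y := by
  unfold simplexReduceCol
  induction (List.finRange n).reverse.map f generalizing B with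
  | nil => rfl
  | cons b l ih => rw [List.foldl_cons, ih, simplexStep_apply_of_ne hy]

theorem pivotChoice_simplexStep {b' : Fin n}
    (h : ∀ s, pivotChoice m f B a b = some s → B b' s = 0) :
    pivotChoice m f (simplexStep m f a B b) a b' = pivotChoice m f B a b' := by
  unfold simplexStep
  cases hd : pivotChoice m f B a b with
  | none => rfl
  | some s =>
    exact pivotChoice_congr (by simp [addCol, h s hd])
      (candidatesAt_congr fun x y hy => by simp [addCol, hy])

theorem simplexStep_congr {c : Fin n} (hca : c ≠ a) (hag : ∀ x y, y ≠ c → B x y = B' x y)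
    (hc : B b a ≠ 0 → f.symm c ∉ candidatesAt m f B a b)
    (hc' : B' b a ≠ 0 → f.symm c ∉ candidatesAt m f B' a b) {x y : Fin n} (hy : y ≠ c) :
    simplexStep m f a B b x y = simplexStep m f a B' b x y := by
  have hba : B b a = B' b a := hag b a hca.symm
  have hdec : pivotChoice m f B a b = pivotChoice m f B' a b := by
    by_cases h₀ : B b a = 0
    · simp [pivotChoice, h₀, ← hba]
    · refine pivotChoice_congr hba (Finset.ext fun t => ?_)
      by_cases ht : t = f.symm c
      · subst ht
        simp only [hc h₀, hc' (hba ▸ h₀)]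
      · exact mem_candidatesAt_congr fun x => hag x _ fun h => ht (by simp [← h])
  unfold simplexStep
  rw [hdec]
  cases hd : pivotChoice m f B' a b with
  | none => exact hag x y hy
  | some s =>
    obtain ⟨hba', hs, -⟩ := pivotChoice_eq_some_iff.1 hd
    have hsc : s ≠ c := by
      rintro rfl
      exact hc' hba' hs
    by_cases hya : y = a
    · simp [addCol, hya, hag x a hca.symm, hag x s hsc]
    · simp [addCol, hya, hag x y hy]

end Steps

section Filtered

variable [DecidableEq P] {L L' : P → P → Prop} {m : Fin n → P} {f : Fin n ≃ Fin n}
  {B : Mat n} {a b : Fin n}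

theorem Filtered.simplexStep [IsTrans P L] (hB : Filtered L m B) (a b : Fin n) :
    Filtered L m (simplexStep m f a B b) := by
  unfold CM.simplexStep
  cases hd : pivotChoice m f B a b with
  | none => exact hB
  | some s =>
    obtain ⟨hba, hs, -⟩ := pivotChoice_eq_some_iff.1 hd
    have hsb : m s = m b := morse_eq_of_mem_candidatesAt hs
    intro x y hxy
    by_cases hy : y = a
    · subst hy
      by_cases hxy' : B x y = 0
      · have hxs : B x s ≠ 0 := by simpa [addCol, hxy'] using hxy
        exact trans_of L (hsb ▸ hB x s hxs) (hB b y hba)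
      · exact hB x y hxy'
    · exact hB x y (by simpa [addCol, hy] using hxy)

theorem Filtered.simplexReduceCol [IsTrans P L] (hB : Filtered L m B) (a : Fin n) :
    Filtered L m (simplexReduceCol m f B a) :=
  foldl_invariant (Filtered L m) _ (fun _ b hC => hC.simplexStep a b) _ hB

theorem Filtered.simplexConMat [IsTrans P L] (hB : Filtered L m B) :
    Filtered L m (simplexConMat m f B) :=
  foldl_invariant (Filtered L m) _ (fun _ a hC => hC.simplexReduceCol a) _ hB

theorem Filtered.notMem_candidatesAt (hB : Filtered L m B) (hba : B b a ≠ 0) {c : Fin n}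
    (hc : ¬ L (m c) (m a)) : f.symm c ∉ candidatesAt m f B a b := fun h =>
  hc (morse_eq_of_mem_candidatesAt h ▸ hB b a hba)

/-- The column added at one row vanishes at the other. -/
theorem simplexStep_comm (hB : Filtered L m B) (hB' : Filtered L' m B) {b₁ b₂ : Fin n}
    (h₁ : ¬ L (m b₁) (m b₂)) (h₂ : ¬ L' (m b₂) (m b₁)) :
    simplexStep m f a (simplexStep m f a B b₁) b₂ =
      simplexStep m f a (simplexStep m f a B b₂) b₁ := by
  have hz₁ : ∀ s, pivotChoice m f B a b₁ = some s → B b₂ s = 0 := fun s hs => by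
    have hsb := morse_eq_of_mem_candidatesAt (pivotChoice_eq_some_iff.1 hs).2.1
    by_contra hne
    exact h₂ (hsb ▸ hB' b₂ s hne)
  have hz₂ : ∀ s, pivotChoice m f B a b₂ = some s → B b₁ s = 0 := fun s hs => by
    have hsb := morse_eq_of_mem_candidatesAt (pivotChoice_eq_some_iff.1 hs).2.1
    by_contra hne
    exact h₁ (hsb ▸ hB b₁ s hne)
  conv_lhs => rw [CM.simplexStep, pivotChoice_simplexStep hz₁]
  conv_rhs => rw [CM.simplexStep, pivotChoice_simplexStep hz₂]
  cases hd₁ : pivotChoice m f B a b₁ <;> cases hd₂ : pivotChoice m f B a b₂ <;>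
    simp only [CM.simplexStep, hd₁, hd₂, Option.elim]
  exact addCol_comm B (ne_of_mem_candidatesAt (pivotChoice_eq_some_iff.1 hd₁).2.1)
    (ne_of_mem_candidatesAt (pivotChoice_eq_some_iff.1 hd₂).2.1)

end Filtered

section MorseFixed

variable {L L' : P → P → Prop} {m : Fin n → P} {e e' : Fin n ≃ Fin n}

theorem MorseFixed.lt_iff (hmf : MorseFixed m e e') {a b : Fin n} (hab : m a = m b) :
    e.symm a < e.symm b ↔ e'.symm a < e'.symm b := by
  simpa only [not_le] using not_congr (hmf b a hab.symm)

theorem MorseFixed.isMorsePivot_iff (hmf : MorseFixed m e e') {B : Mat n} {s b : Fin n} :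
    IsMorsePivot m e B s b ↔ IsMorsePivot m e' B s b :=
  and_congr_right fun _ => and_congr_right fun hbs =>
    forall_congr' fun k => forall₂_congr fun _ hks => hmf k b (hks.trans hbs.symm)

theorem MorseFixed.not_rel_of_inverted [Std.Antisymm L] [Std.Antisymm L']
    (hmf : MorseFixed m e e') (he : MonotoneOrdering L m e) (he' : MonotoneOrdering L' m e')
    {x y : Fin n} (h : e.symm x < e.symm y) (h' : e'.symm y < e'.symm x) :
    ¬ L (m y) (m x) ∧ ¬ L' (m x) (m y) := by
  have hne : m x ≠ m y := fun hxy => ((hmf x y hxy).1 h.le).not_gt h'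
  exact ⟨fun hyx => hne (he.morse_eq hyx h.le).symm, fun hxy => hne (he'.morse_eq hxy h'.le)⟩

end MorseFixed

section MorsePivot

variable {L : P → P → Prop} [Std.Antisymm L] {m : Fin n → P}
  {f : Fin n ≃ Fin n} {B : Mat n}

theorem homog_isLow_iff (hf : MonotoneOrdering L m f) (hB : Filtered L m B) (j b : Fin n) :
    Homog (reindex B f) (m ∘ f) j ∧ IsLow (reindex B f) j (f.symm b) ↔
      IsMorsePivot m f B (f j) b := by
  constructor
  · rintro ⟨⟨i, hi, hm⟩, hlow⟩
    rw [hi.unique hlow] at hm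
    exact ⟨by simpa using hlow.1, by simpa using hm,
      fun k hk _ => by simpa using hlow.2 (f.symm k) (by simpa using hk)⟩
  · rintro ⟨hbj, hmb, hmax⟩
    have hlow : IsLow (reindex B f) j (f.symm b) := by
      refine ⟨by simpa using hbj, fun k hk => ?_⟩
      have hk' : B (f k) (f j) ≠ 0 := hk
      by_contra hbk
      have hmk : m (f k) = m b := hf.morse_eq (hmb ▸ hB _ _ hk') (by simpa using (not_le.1 hbk).le)
      exact hbk (by simpa using hmax (f k) hk' (hmk.trans hmb))
    exact ⟨⟨f.symm b, hlow, by simpa using hmb⟩, hlow⟩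

theorem homog_reindex_iff (hf : MonotoneOrdering L m f) (hB : Filtered L m B) (j : Fin n) :
    Homog (reindex B f) (m ∘ f) j ↔ ∃ b, IsMorsePivot m f B (f j) b := by
  refine ⟨fun h => ?_, fun ⟨b, hb⟩ => ((homog_isLow_iff hf hB j b).2 hb).1⟩
  obtain ⟨i, hi, -⟩ := id h
  exact ⟨f i, (homog_isLow_iff hf hB j (f i)).1 ⟨h, by simpa using hi⟩⟩

theorem targetable_reindex_iff (hf : MonotoneOrdering L m f) (hB : Filtered L m B) (i : Fin n) :
    Targetable (reindex B f) (m ∘ f) i ↔ ∃ s, IsMorsePivot m f B s (f i) := by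
  constructor
  · rintro ⟨j, hj, hlow⟩
    exact ⟨f j, (homog_isLow_iff hf hB j (f i)).1 ⟨hj, by simpa using hlow⟩⟩
  · rintro ⟨s, hs⟩
    obtain ⟨hj, hlow⟩ := (homog_isLow_iff hf hB (f.symm s) (f i)).2 (by simpa using hs)
    exact ⟨f.symm s, hj, by simpa using hlow⟩

theorem mem_candidatesAt_iff [DecidableEq P] (hf : MonotoneOrdering L m f) (hB : Filtered L m B) {a b : Fin n}
    (hba : B b a ≠ 0) (s : Fin n) :
    f.symm s ∈ candidatesAt m f B a b ↔
      IsMorsePivot m f B s b ∧ (m s = m a → f.symm s < f.symm a) := by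
  have hc := homog_isLow_iff hf hB (f.symm s) b
  rw [Equiv.apply_symm_apply] at hc
  rw [mem_candidatesAt, hc, and_comm]
  refine and_congr_right fun hs => ⟨fun h _ => h, fun h => ?_⟩
  by_cases hsa : m s = m a
  · exact h hsa
  · exact lt_of_not_ge fun has => hsa (hf.morse_eq (hs.2.1 ▸ hB b a hba) has)

end MorsePivot

section Independence

variable [DecidableEq P] {L L' : P → P → Prop} {m : Fin n → P} {f e e' : Fin n ≃ Fin n}
  {B : Mat n}

theorem simplexReduceCol_congr [IsTrans P L] {B' : Mat n} {a c : Fin n} (hca : c ≠ a)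
    (hc : ¬ L (m c) (m a)) (hB : Filtered L m B) (hB' : Filtered L m B')
    (hag : ∀ x y, y ≠ c → B x y = B' x y) {x y : Fin n} (hy : y ≠ c) :
    simplexReduceCol m f B a x y = simplexReduceCol m f B' a x y := by
  unfold CM.simplexReduceCol
  induction (List.finRange n).reverse.map f generalizing B B' with
  | nil => exact hag x y hy
  | cons b l ih =>
    exact ih (hB.simplexStep a b) (hB'.simplexStep a b) fun x y hy =>
      simplexStep_congr hca hag (fun hba => hB.notMem_candidatesAt hba hc)
        (fun hba => hB'.notMem_candidatesAt hba hc) hy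

/-- Neither column can serve as a candidate for the other. -/
theorem simplexReduceCol_comm [IsTrans P L] [IsTrans P L'] (hB : Filtered L m B)
    (hB' : Filtered L' m B) {a₁ a₂ : Fin n} (hne : a₁ ≠ a₂) (h : ¬ L (m a₂) (m a₁))
    (h' : ¬ L' (m a₁) (m a₂)) :
    simplexReduceCol m f (simplexReduceCol m f B a₁) a₂ =
      simplexReduceCol m f (simplexReduceCol m f B a₂) a₁ := by
  have hframe : ∀ a, ∀ x y, y ≠ a → simplexReduceCol m f B a x y = B x y :=
    fun _ _ _ hy => simplexReduceCol_apply_of_ne hy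
  ext x y
  by_cases hy₁ : y = a₁
  · subst hy₁
    rw [simplexReduceCol_apply_of_ne hne]
    exact (simplexReduceCol_congr hne.symm h (hB.simplexReduceCol a₂) hB (hframe a₂) hne).symm
  by_cases hy₂ : y = a₂
  · subst hy₂
    rw [simplexReduceCol_apply_of_ne hne.symm]
    exact simplexReduceCol_congr hne h' (hB'.simplexReduceCol a₁) hB' (hframe a₁) hne.symm
  rw [simplexReduceCol_apply_of_ne hy₂, simplexReduceCol_apply_of_ne hy₁,
    simplexReduceCol_apply_of_ne hy₁, simplexReduceCol_apply_of_ne hy₂]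

variable [Std.Antisymm L] [Std.Antisymm L'] (he : MonotoneOrdering L m e)
  (he' : MonotoneOrdering L' m e') (hmf : MorseFixed m e e')
include he he' hmf

/-- Candidates are characterized through the order inside Morse sets, and all of them lie in
the Morse set of the row, where `e` and `e'` agree. -/
theorem pivotChoice_eq_of_morseFixed (hB : Filtered L m B) (hB' : Filtered L' m B)
    (a b : Fin n) : pivotChoice m e B a b = pivotChoice m e' B a b := by
  refine Option.ext fun s => ?_
  rw [pivotChoice_eq_some_iff, pivotChoice_eq_some_iff]
  refine and_congr_right fun hba => ?_
  have hmem : ∀ t, e.symm t ∈ candidatesAt m e B a b ↔ e'.symm t ∈ candidatesAt m e' B a b := by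
    intro t
    rw [mem_candidatesAt_iff he hB hba, mem_candidatesAt_iff he' hB' hba, hmf.isMorsePivot_iff]
    exact and_congr_right fun _ => imp_congr_right fun hta => hmf.lt_iff hta
  rw [hmem s]
  refine and_congr_right fun hs => forall_congr' fun t => ?_
  rw [hmem t]
  exact imp_congr_right fun ht => hmf s t
    ((morse_eq_of_mem_candidatesAt hs).trans (morse_eq_of_mem_candidatesAt ht).symm)

theorem simplexStep_eq_of_morseFixed (hB : Filtered L m B) (hB' : Filtered L' m B)
    (a b : Fin n) : simplexStep m e a B b = simplexStep m e' a B b := by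
  rw [simplexStep, simplexStep, pivotChoice_eq_of_morseFixed he he' hmf hB hB' a b]

variable [IsTrans P L] [IsTrans P L']

theorem simplexReduceCol_eq_of_morseFixed (hB : Filtered L m B) (hB' : Filtered L' m B)
    (a : Fin n) : simplexReduceCol m e B a = simplexReduceCol m e' B a := by
  let I : Mat n → Prop := fun C => Filtered L m C ∧ Filtered L' m C
  have hI : ∀ C b, I C → I (simplexStep m e a C b) :=
    fun _ b hC => ⟨hC.1.simplexStep a b, hC.2.simplexStep a b⟩
  have hrev {g : Fin n ≃ Fin n} {x y : Fin n}
      (h : [x, y].Sublist ((List.finRange n).reverse.map g)) : g.symm y < g.symm x :=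
    rel_of_pair_sublist_map (R := fun i j => j < i)
      (List.pairwise_reverse.2 (List.pairwise_lt_finRange n)) g h
  calc simplexReduceCol m e B a
      = ((List.finRange n).reverse.map e').foldl (simplexStep m e a) B := by
        refine foldl_eq_of_perm_of_comm I _ hI (perm_map_finRange_reverse e e')
          ((List.nodup_reverse.2 (List.nodup_finRange n)).map e.injective)
          (fun b₁ b₂ h h' C hC => ?_) ⟨hB, hB'⟩
        obtain ⟨h₁, h₂⟩ := hmf.not_rel_of_inverted he he' (hrev h) (hrev h')
        exact simplexStep_comm hC.1 hC.2 h₁ h₂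
    _ = simplexReduceCol m e' B a :=
        foldl_congr_of_invariant I _ hI
          (fun _ b hC => simplexStep_eq_of_morseFixed he he' hmf hC.1 hC.2 a b) _ ⟨hB, hB'⟩

theorem simplexConMat_eq_of_morseFixed (hB : Filtered L m B) (hB' : Filtered L' m B) :
    simplexConMat m e B = simplexConMat m e' B := by
  let I : Mat n → Prop := fun C => Filtered L m C ∧ Filtered L' m C
  have hI : ∀ C a, I C → I (simplexReduceCol m e C a) :=
    fun _ a hC => ⟨hC.1.simplexReduceCol a, hC.2.simplexReduceCol a⟩
  have hfwd {g : Fin n ≃ Fin n} {x y : Fin n}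
      (h : [x, y].Sublist ((List.finRange n).map g)) : g.symm x < g.symm y :=
    rel_of_pair_sublist_map (List.pairwise_lt_finRange n) g h
  calc simplexConMat m e B
      = ((List.finRange n).map e').foldl (simplexReduceCol m e) B := by
        refine foldl_eq_of_perm_of_comm I _ hI (perm_map_finRange e e')
          ((List.nodup_finRange n).map e.injective) (fun a₁ a₂ h h' C hC => ?_) ⟨hB, hB'⟩
        obtain ⟨h₁, h₂⟩ := hmf.not_rel_of_inverted he he' (hfwd h) (hfwd h')
        have hne : a₁ ≠ a₂ := fun h₁₂ => (hfwd h).ne (congrArg e.symm h₁₂)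
        exact simplexReduceCol_comm hC.1 hC.2 hne h₁ h₂
    _ = simplexConMat m e' B :=
        foldl_congr_of_invariant I _ hI
          (fun _ a hC => simplexReduceCol_eq_of_morseFixed he he' hmf hC.1 hC.2 a) _ ⟨hB, hB'⟩

end Independence

end ConMat

theorem stmt_15_general {n : ℕ} {P : Type*} [DecidableEq P]
    (D : Matrix (Fin n) (Fin n) (ZMod 2))
    (morse0 : Fin n → P) (e e' : Fin n ≃ Fin n)
    (hupper : ∀ i j, reindex D e i j ≠ 0 → i < j)
    (hupper' : ∀ i j, reindex D e' i j ≠ 0 → i < j)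
    (lle lle' : P → P → Prop)
    (hlin : IsLinearOrder P lle) (hlin' : IsLinearOrder P lle')
    (hcompat : ∀ i j : Fin n, i ≤ j → lle (morse0 (e i)) (morse0 (e j)))
    (hcompat' : ∀ i j : Fin n, i ≤ j → lle' (morse0 (e' i)) (morse0 (e' j)))
    (hMorseFixed : ∀ a b : Fin n, morse0 a = morse0 b →
      (e.symm a ≤ e.symm b ↔ e'.symm a ≤ e'.symm b)) :
    (∀ i i' : Fin n, e i = e' i' →
      ((Homog (conMat (morse0 ∘ e) (reindex D e)) (morse0 ∘ e) i ↔
          Homog (conMat (morse0 ∘ e') (reindex D e')) (morse0 ∘ e') i') ∧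
        (Targetable (conMat (morse0 ∘ e) (reindex D e)) (morse0 ∘ e) i ↔
          Targetable (conMat (morse0 ∘ e') (reindex D e')) (morse0 ∘ e') i'))) ∧
    (∀ i i' j j' : Fin n, e i = e' i' → e j = e' j' →
      Retained (conMat (morse0 ∘ e) (reindex D e)) (morse0 ∘ e) i →
      Retained (conMat (morse0 ∘ e) (reindex D e)) (morse0 ∘ e) j →
      conMat (morse0 ∘ e) (reindex D e) i j =
        conMat (morse0 ∘ e') (reindex D e')  i' j') ∧
    (∃ g : Equiv.Perm (Fin n),
      (∀ i : Fin n, Retained (conMat (morse0 ∘ e) (reindex D e)) (morse0 ∘ e) i ↔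
        Retained (conMat (morse0 ∘ e') (reindex D e')) (morse0 ∘ e') (g i)) ∧
      ∀ i j : Fin n,
        Retained (conMat (morse0 ∘ e) (reindex D e)) (morse0 ∘ e) i →
        Retained (conMat (morse0 ∘ e) (reindex D e)) (morse0 ∘ e) j →
        conMat (morse0 ∘ e) (reindex D e) i j =
          conMat (morse0 ∘ e') (reindex D e') (g i) (g j)) := by
  have hD : Filtered lle morse0 D := MonotoneOrdering.filtered_of_upper hcompat hupper
  have hD' : Filtered lle' morse0 D := MonotoneOrdering.filtered_of_upper hcompat' hupper'
  rw [conMat_reindex, conMat_reindex,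
    ← simplexConMat_eq_of_morseFixed hcompat hcompat' hMorseFixed hD hD']
  set F := simplexConMat morse0 e D
  have hF : Filtered lle morse0 F := hD.simplexConMat
  have hF' : Filtered lle' morse0 F := hD'.simplexConMat
  have hstatus : ∀ i i', e i = e' i' →
      (Homog (reindex F e) (morse0 ∘ e) i ↔ Homog (reindex F e') (morse0 ∘ e') i') ∧
      (Targetable (reindex F e) (morse0 ∘ e) i ↔ Targetable (reindex F e') (morse0 ∘ e') i') := by
    intro i i' hi
    rw [homog_reindex_iff hcompat hF, homog_reindex_iff hcompat' hF',
      targetable_reindex_iff hcompat hF, targetable_reindex_iff hcompat' hF', hi]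
    simp only [MorseFixed.isMorsePivot_iff hMorseFixed, and_self]
  refine ⟨hstatus, fun i i' j j' hi hj _ _ => by simp [hi, hj], e.trans e'.symm,
    fun i => ?_, fun i j _ _ => by simp⟩
  have h := hstatus i _ (e'.apply_symm_apply (e i)).symm
  exact and_congr (not_congr h.1) (not_congr h.2)

/-- Morse-fixed invariance of ConMat. Let `∂` be the boundary matrix (`∂ * ∂ = 0`)
of a simplicial complex on simplices `Fin n` with Morse decomposition `morse0`
indexed by a poset `P`, and let `e, e'` be two orderings of the simplices, each
giving a strictly upper triangular matrix filtered along a linear extension of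
`P`, which are Morse fixed: within each Morse set the two orderings agree.
Then the connection matrices output by ConMat agree under the induced
correspondence of indices (`e i = e' i'` means `i =_σ i'`): retained/homogeneous/
targetable statuses correspond and retained entries are equal. Consequently there
is a permutation `g` carrying the connection submatrix `S` to `S'`
(`RᵀSR = S'`). -/
theorem stmt_15 {n : ℕ} {P : Type*} [PartialOrder P] [Fintype P] [DecidableEq P]
    (D : Matrix (Fin n) (Fin n) (ZMod 2)) (hboundary : D * D = 0)
    (morse0 : Fin n → P) (e e' : Fin n ≃ Fin n)
    (hupper : ∀ i j, reindex D e i j ≠ 0 → i < j)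
    (hupper' : ∀ i j, reindex D e' i j ≠ 0 → i < j)
    (lle lle' : P → P → Prop)
    (hlin : IsLinearOrder P lle) (hlin' : IsLinearOrder P lle')
    (hext : ∀ p q : P, p ≤ q → lle p q) (hext' : ∀ p q : P, p ≤ q → lle' p q)
    (hcompat : ∀ i j : Fin n, i ≤ j → lle (morse0 (e i)) (morse0 (e j)))
    (hcompat' : ∀ i j : Fin n, i ≤ j → lle' (morse0 (e' i)) (morse0 (e' j)))
    (hMorseFixed : ∀ a b : Fin n, morse0 a = morse0 b →
      (e.symm a ≤ e.symm b ↔ e'.symm a ≤ e'.symm b)) :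
    (∀ i i' : Fin n, e i = e' i' →
      ((Homog (conMat (morse0 ∘ e) (reindex D e)) (morse0 ∘ e) i ↔
          Homog (conMat (morse0 ∘ e') (reindex D e')) (morse0 ∘ e') i') ∧
        (Targetable (conMat (morse0 ∘ e) (reindex D e)) (morse0 ∘ e) i ↔
          Targetable (conMat (morse0 ∘ e') (reindex D e')) (morse0 ∘ e') i'))) ∧
    (∀ i i' j j' : Fin n, e i = e' i' → e j = e' j' →
      Retained (conMat (morse0 ∘ e) (reindex D e)) (morse0 ∘ e) i →
      Retained (conMat (morse0 ∘ e) (reindex D e)) (morse0 ∘ e) j →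
      conMat (morse0 ∘ e) (reindex D e) i j =
        conMat (morse0 ∘ e') (reindex D e')  i' j') ∧
    (∃ g : Equiv.Perm (Fin n),
      (∀ i : Fin n, Retained (conMat (morse0 ∘ e) (reindex D e)) (morse0 ∘ e) i ↔
        Retained (conMat (morse0 ∘ e') (reindex D e')) (morse0 ∘ e') (g i)) ∧
      ∀ i j : Fin n,
        Retained (conMat (morse0 ∘ e) (reindex D e)) (morse0 ∘ e) i →
        Retained (conMat (morse0 ∘ e) (reindex D e)) (morse0 ∘ e) j →
        conMat (morse0 ∘ e) (reindex D e) i j =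
          conMat (morse0 ∘ e') (reindex D e') (g i) (g j)) :=
  stmt_15_general D morse0 e e' hupper hupper' lle lle' hlin hlin' hcompat hcompat' hMorseFixed

end CM
end
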